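/- Fix t ∈ ℕ. Let f_b(s) = σ(s + b) with b < 0. Then as b → −∞, the fraction of the Gaussian L² mass of f_b in Hermite degrees ≤ t vanishes: (Σ_{k=0}^t ⟨f_b, H_k/√(k!)⟩_N²) / ‖f_b‖_N² → 0. -/

import Mathlib

open MeasureTheory ProbabilityTheory Real Filter

noncomputable def phi (t : ℝ) : ℝ := (Real.sqrt (2 * Real.pi))⁻¹ * Real.exp (-t ^ 2 / 2)

noncomputable def Phi (b : ℝ) : ℝ := ∫ t in Set.Iic b, phi t


noncomputable def relu (z : ℝ) : ℝ := max z 0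

/-! Since `σ(z + b)` vanishes for `z < -b`, Cauchy–Schwarz in `L²(N(0,1))` restricted to
`[-b, ∞)` gives `⟨f_b, h_k⟩² ≤ ‖f_b‖² · ∫_{-b}^∞ h_k² φ` for every normalised Hermite polynomial
`h_k`. Hence the ratio is at most `∑_{k ≤ t} ∫_{-b}^∞ h_k² φ`, a finite sum of tails of integrable
functions, which tends to `0` as `b → -∞`. -/

open Set Polynomial

lemma phi_pos (x : ℝ) : 0 < phi x := by
  unfold phi
  positivity

lemma continuous_phi : Continuous phi := by
  unfold phi
  fun_prop

lemma continuous_relu : Continuous relu := continuous_id.max continuous_const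

lemma relu_eq_zero_of_nonpos {x : ℝ} (hx : x ≤ 0) : relu x = 0 := max_eq_right hx

lemma relu_sq_le_sq (x : ℝ) : relu x ^ 2 ≤ x ^ 2 := by
  rcases le_or_gt x 0 with hx | hx
  · simpa [relu_eq_zero_of_nonpos hx] using sq_nonneg x
  · rw [relu, max_eq_left hx.le]

lemma integrable_pow_mul_phi (n : ℕ) : Integrable fun x : ℝ => x ^ n * phi x := by
  have h := (integrable_rpow_mul_exp_neg_mul_sq (b := 1 / 2) (s := n) (by norm_num)
    (neg_one_lt_zero.trans_le n.cast_nonneg)).const_mul (√(2 * π))⁻¹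
  refine h.congr (ae_of_all _ fun x => ?_)
  simp only [Real.rpow_natCast, phi]
  ring_nf

lemma integrable_aeval_mul_phi {R : Type*} [CommSemiring R] [Algebra R ℝ] (p : R[X]) :
    Integrable fun x : ℝ => aeval x p * phi x := by
  simp_rw [aeval_def, eval₂_eq_eval_map, eval_eq_sum_range, Finset.sum_mul, mul_assoc]
  exact integrable_finsetSum _ fun i _ => (integrable_pow_mul_phi i).const_mul _

lemma integrable_sq_aeval_div_mul_phi {R : Type*} [CommSemiring R] [Algebra R ℝ] (p : R[X])
    (c : ℝ) : Integrable fun x : ℝ => (aeval x p / c) ^ 2 * phi x := by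
  refine ((integrable_aeval_mul_phi (p ^ 2)).div_const (c ^ 2)).congr (ae_of_all _ fun x => ?_)
  simp only [map_pow, div_pow]
  ring

lemma integrable_relu_sq_mul_phi (b : ℝ) : Integrable fun z : ℝ => relu (z + b) ^ 2 * phi z := by
  have hcont : Continuous fun z : ℝ => relu (z + b) ^ 2 * phi z :=
    ((continuous_relu.comp (continuous_add_const b)).pow 2).mul continuous_phi
  refine (integrable_aeval_mul_phi ((X + C b) ^ 2)).mono' hcont.aestronglyMeasurable (ae_of_all _ fun z => ?_)
  rw [Real.norm_of_nonneg (mul_nonneg (sq_nonneg _) (phi_pos z).le)]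
  simpa using mul_le_mul_of_nonneg_right (relu_sq_le_sq (z + b)) (phi_pos z).le

theorem sq_integral_mul_le_integral_sq_mul_integral_sq {α : Type*} [MeasurableSpace α]
    {μ : Measure α} {f g : α → ℝ} (hf : MemLp f 2 μ) (hg : MemLp g 2 μ) :
    (∫ x, f x * g x ∂μ) ^ 2 ≤ (∫ x, f x ^ 2 ∂μ) * ∫ x, g x ^ 2 ∂μ := by
  have inner_toLp {u v : α → ℝ} (hu : MemLp u 2 μ) (hv : MemLp v 2 μ) :
      inner ℝ (hu.toLp u) (hv.toLp v) = ∫ x, u x * v x ∂μ := by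
    rw [L2.inner_def]
    refine integral_congr_ae ?_
    filter_upwards [hu.coeFn_toLp, hv.coeFn_toLp] with x hux hvx
    simp [hux, hvx, mul_comm]
  simpa only [inner_toLp, sq] using real_inner_mul_inner_self_le (hf.toLp f) (hg.toLp g)

lemma sq_integral_relu_mul_le (b : ℝ) {g : ℝ → ℝ} (hg : Continuous g)
    (hg2 : Integrable fun z => g z ^ 2 * phi z) :
    (∫ z, relu (z + b) * g z * phi z) ^ 2 ≤
      (∫ z, relu (z + b) ^ 2 * phi z) * ∫ z in Ici (-b), g z ^ 2 * phi z := by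
  have hvanish (z : ℝ) (hz : z ∉ Ici (-b)) : relu (z + b) = 0 :=
    relu_eq_zero_of_nonpos (by rw [mem_Ici, not_le] at hz; linarith)
  have hsqrt (z : ℝ) : √(phi z) ^ 2 = phi z := sq_sqrt (phi_pos z).le
  have memLp_mul_sqrt_phi {h : ℝ → ℝ} (hc : Continuous h)
      (hi : Integrable fun z => h z ^ 2 * phi z) :
      MemLp (fun z => h z * √(phi z)) 2 (volume.restrict (Ici (-b))) := by
    refine (memLp_two_iff_integrable_sq (f := fun z => h z * √(phi z))
      (hc.mul continuous_phi.sqrt).aestronglyMeasurable).2 ?_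
    simp_rw [mul_pow, hsqrt]
    exact hi.integrableOn
  have hprod (z : ℝ) :
      relu (z + b) * √(phi z) * (g z * √(phi z)) = relu (z + b) * g z * phi z := by
    linear_combination relu (z + b) * g z * mul_self_sqrt (phi_pos z).le
  have CS := sq_integral_mul_le_integral_sq_mul_integral_sq
    (memLp_mul_sqrt_phi (h := fun z => relu (z + b))
      (continuous_relu.comp (continuous_add_const b)) (integrable_relu_sq_mul_phi b))
    (memLp_mul_sqrt_phi hg hg2)
  simp_rw [hprod, mul_pow, hsqrt] at CS
  rwa [setIntegral_eq_integral_of_forall_compl_eq_zero fun z hz => by simp [hvanish z hz],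
    setIntegral_eq_integral_of_forall_compl_eq_zero fun z hz => by simp [hvanish z hz]] at CS

/-- For any fixed t, as b → −∞ the fraction of the Gaussian L² mass of σ(·+b) in
Hermite degrees ≤ t vanishes. -/
theorem stmt_17 (t : ℕ) :
    Tendsto (fun b : ℝ =>
      (∑ k ∈ Finset.range (t + 1),
        (∫ z, relu (z + b) * (Polynomial.aeval z (Polynomial.hermite k))
            / Real.sqrt (Nat.factorial k) * phi z) ^ 2)
      / (∫ z, (relu (z + b)) ^ 2 * phi z)) atBot (nhds 0) := by
  set tail : ℕ → ℝ → ℝ := fun k b =>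
    ∫ z in Ici (-b), (aeval z (hermite k) / √(k.factorial : ℝ)) ^ 2 * phi z
  have htail : Tendsto (fun b => ∑ k ∈ Finset.range (t + 1), tail k b) atBot (nhds 0) := by
    have htail_k (k : ℕ) : Tendsto (tail k) atBot (nhds 0) :=
      tendsto_integral_Ici_zero tendsto_neg_atBot_atTop
    simpa using tendsto_finsetSum (Finset.range (t + 1)) fun k _ => htail_k k
  have hnorm_nonneg (b : ℝ) : 0 ≤ ∫ z, relu (z + b) ^ 2 * phi z :=
    integral_nonneg fun z => mul_nonneg (sq_nonneg _) (phi_pos z).le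
  refine tendsto_of_tendsto_of_tendsto_of_le_of_le tendsto_const_nhds htail
    (fun b => ?_) fun b => ?_
  · exact div_nonneg (Finset.sum_nonneg fun _ _ => sq_nonneg _) (hnorm_nonneg b)
  · refine div_le_of_le_mul₀ (hnorm_nonneg b) (Finset.sum_nonneg fun k _ =>
      setIntegral_nonneg measurableSet_Ici fun z _ => mul_nonneg (sq_nonneg _) (phi_pos z).le) ?_
    rw [Finset.sum_mul]
    refine Finset.sum_le_sum fun k _ => ?_
    simp_rw [mul_div_assoc, mul_comm (tail k b)]
    exact sq_integral_relu_mul_le b ((hermite k).continuous_aeval.div_const _)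
      (integrable_sq_aeval_div_mul_phi _ _)
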